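/- arXiv:2512.19313 — 2 statements merged into one kernel-verified Lean document; each statement's English description precedes it below -/
import Mathlib

section
/- Let f : F_{p^n} → F_p, c, d ∈ F_{p^n}, and λ ∈ F_p*. If the second-order derivative D_{c,d} f(x) equals λ for all x, then for every b ∈ F_{p^n} with Tr_n(bd) ≠ λ one has W_{D_c f}(b) = 0. -/
open Finset
open scoped Classical

noncomputable instance (p n : ℕ) [Fact p.Prime] : Fintype (GaloisField p n) :=
  Fintype.ofFinite _

noncomputable def omg (p : ℕ) : ℂ := Complex.exp (2 * Real.pi * Complex.I / p)

noncomputable def ee (p : ℕ) (c : ZMod p) : ℂ := omg p ^ c.val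

noncomputable def Tr (p n : ℕ) [Fact p.Prime] (x : GaloisField p n) : ZMod p :=
  Algebra.trace (ZMod p) (GaloisField p n) x

noncomputable def W (p n : ℕ) [Fact p.Prime] (f : GaloisField p n → ZMod p)
    (y : GaloisField p n) : ℂ :=
  ∑ x : GaloisField p n, ee p (f x - Tr p n (x * y))

noncomputable def D (p n : ℕ) [Fact p.Prime] (a : GaloisField p n) (f : GaloisField p n → ZMod p)
    (x : GaloisField p n) : ZMod p :=
  f (x + a) - f x

noncomputable def D2 (p n : ℕ) [Fact p.Prime] (a b : GaloisField p n) (f : GaloisField p n → ZMod p)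
    (x : GaloisField p n) : ZMod p :=
  f (x + a + b) - f (x + a) - f (x + b) + f x

def IsBalanced (p n : ℕ) [Fact p.Prime] (f : GaloisField p n → ZMod p) : Prop :=
  ∀ c : ZMod p, (Finset.univ.filter (fun x => f x = c)).card = p ^ (n - 1)

def Bent (p n : ℕ) [Fact p.Prime] (f : GaloisField p n → ZMod p) : Prop :=
  ∀ y : GaloisField p n, ‖W p n f y‖ ^ 2 = (p : ℝ) ^ n

def IsQuadratic (p n : ℕ) [Fact p.Prime] (f : GaloisField p n → ZMod p) : Prop :=
  ∀ a b : GaloisField p n, ∃ c : ZMod p, ∀ x, D2 p n a b f x = c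

def IsCubic (p n : ℕ) [Fact p.Prime] (f : GaloisField p n → ZMod p) : Prop :=
  ∀ a b c : GaloisField p n, ∃ l : ZMod p, ∀ x, D2 p n b c f (x + a) - D2 p n b c f x = l

/-!
Since `D_c f (x + d) = D_c f x + D_{c,d} f x = D_c f x + λ`, the substitution `x ↦ x + d`
multiplies every term of the Walsh sum `W_{D_c f}(b)` by the root of unity `ω^(λ - Tr(bd))`,
which is not `1` when `Tr(bd) ≠ λ`; a sum fixed by multiplication by a constant `≠ 1` is `0`.
-/

lemma ee_add (p : ℕ) [Fact p.Prime] (a b : ZMod p) : ee p (a + b) = ee p a * ee p b := by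
  have hω : omg p ^ p = 1 :=
    (Complex.isPrimitiveRoot_exp p (Fact.out : p.Prime).ne_zero).pow_eq_one
  unfold ee
  rw [ZMod.val_add, ← pow_add, ← Nat.mod_add_div (a.val + b.val) p, pow_add, pow_mul, hω,
    one_pow, mul_one, Nat.mod_add_div]

lemma ee_ne_one (p : ℕ) [Fact p.Prime] {a : ZMod p} (ha : a ≠ 0) : ee p a ≠ 1 :=
  (Complex.isPrimitiveRoot_exp p (Fact.out : p.Prime).ne_zero).pow_ne_one_of_pos_of_lt
    ((ZMod.val_ne_zero a).mpr ha) (ZMod.val_lt a)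

lemma Fintype.sum_eq_zero_of_map_add_eq_mul {G K : Type*} [AddGroup G] [Fintype G]
    [CommRing K] [NoZeroDivisors K] (F : G → K) (d : G) {z : K} (hz : z ≠ 1)
    (h : ∀ x, F (x + d) = z * F x) : ∑ x, F x = 0 := by
  have hfix : z * ∑ x, F x = ∑ x, F x :=
    calc z * ∑ x, F x = ∑ x, F (x + d) := by simp only [mul_sum, h]
      _ = ∑ x, F x := Equiv.sum_comp (Equiv.addRight d) F
  have : (z - 1) * ∑ x, F x = 0 := by rw [sub_mul, one_mul, hfix, sub_self]
  exact (mul_eq_zero.mp this).resolve_left (sub_ne_zero.mpr hz)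

lemma D_add_eq_add_D2 (p n : ℕ) [Fact p.Prime] (f : GaloisField p n → ZMod p)
    (c d x : GaloisField p n) : D p n c f (x + d) = D p n c f x + D2 p n c d f x := by
  simp only [D, D2, add_right_comm x d c]
  ring

lemma W_eq_zero_of_map_add (p n : ℕ) [Fact p.Prime] (g : GaloisField p n → ZMod p)
    (d : GaloisField p n) (l : ZMod p) (h : ∀ x, g (x + d) = g x + l)
    (b : GaloisField p n) (hb : Tr p n (b * d) ≠ l) : W p n g b = 0 := by
  refine Fintype.sum_eq_zero_of_map_add_eq_mul _ d
    (ee_ne_one p (sub_ne_zero.mpr hb.symm)) fun x => ?_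
  have htr : Tr p n ((x + d) * b) = Tr p n (x * b) + Tr p n (b * d) := by
    rw [add_mul, mul_comm d b]
    exact map_add _ _ _
  rw [← ee_add, h, htr]
  congr 1
  ring

theorem stmt_14_general (p n : ℕ) [Fact p.Prime] (f : GaloisField p n → ZMod p)
    (c d : GaloisField p n) (l : ZMod p)
    (h : ∀ x, D2 p n c d f x = l) :
    ∀ b : GaloisField p n, Tr p n (b * d) ≠ l → W p n (D p n c f) b = 0 :=
  W_eq_zero_of_map_add p n _ d l fun x => by rw [D_add_eq_add_D2, h]

theorem stmt_14 (p n : ℕ) [Fact p.Prime] (f : GaloisField p n → ZMod p)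
    (c d : GaloisField p n) (l : ZMod p) (hl : l ≠ 0)
    (h : ∀ x, D2 p n c d f x = l) :
    ∀ b : GaloisField p n, Tr p n (b * d) ≠ l → W p n (D p n c f) b = 0 :=
  stmt_14_general p n f c d l h
end

section
/- Let f, g : F_{p^n} → F_p be weakly regular bent functions with duals f*, g* and the same unimodular constant u (p^{−n/2}W_f = u ω^{f*}, p^{−n/2}W_g = u ω^{g*}). Then ∑_{b ∈ F_{p^n}} ω^{f*(b) − g*(b)} = ∑_{x ∈ F_{p^n}} ω^{f(x) − g(x)}. -/
open Finset
open scoped Classical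

/-! Parseval for the Walsh transform, `∑_b W_f(b) · conj (W_g(b)) = p^n ∑_x ω^{f(x) - g(x)}`,
is orthogonality of the additive characters `x ↦ ω^{Tr(x y)}` of `𝔽_{p^n}`. For weakly regular
`f, g` with the same `u`, `|u| = 1` turns each term on the left into `p^n ω^{f*(b) - g*(b)}`. -/

namespace AddChar

variable {R : Type*} [CommRing R] [Fintype R] {ψ : AddChar R ℂ}

theorem IsPrimitive.sum_transform_mul_conj (hψ : ψ.IsPrimitive) (F G : R → ℂ) :
    ∑ y, (∑ x, F x * ψ (x * y)) * starRingEnd ℂ (∑ x, G x * ψ (x * y)) =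
      Fintype.card R * ∑ x, F x * starRingEnd ℂ (G x) := by
  have orthogonality (x z : R) :
      ∑ y, ψ (y * (x - z)) = if x = z then (Fintype.card R : ℂ) else 0 := by
    simp [sum_mulShift _ hψ, sub_eq_zero]
  calc ∑ y, (∑ x, F x * ψ (x * y)) * starRingEnd ℂ (∑ x, G x * ψ (x * y))
      = ∑ x, ∑ z, F x * starRingEnd ℂ (G z) * ∑ y, ψ (y * (x - z)) := by
        simp_rw [map_sum, Finset.sum_mul_sum, Finset.mul_sum]
        rw [Finset.sum_comm]
        refine Finset.sum_congr rfl fun x _ => ?_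
        rw [Finset.sum_comm]
        refine Finset.sum_congr rfl fun z _ => Finset.sum_congr rfl fun y _ => ?_
        rw [map_mul (starRingEnd ℂ), ← map_neg_eq_conj, mul_sub, sub_eq_add_neg, map_add_eq_mul,
          mul_comm y, mul_comm y]
        ring
    _ = Fintype.card R * ∑ x, F x * starRingEnd ℂ (G x) := by
        simp [orthogonality, Finset.mul_sum, mul_comm]

end AddChar

section GaloisField

variable (p n : ℕ) [Fact p.Prime]

theorem ee_eq_stdAddChar (c : ZMod p) : ee p c = ZMod.stdAddChar c := by
  rw [ee, omg, ZMod.stdAddChar_apply, ZMod.toCircle_apply, ← Complex.exp_nat_mul]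
  ring_nf

theorem ee_sub (a b : ZMod p) : ee p (a - b) = ee p a * starRingEnd ℂ (ee p b) := by
  simp only [ee_eq_stdAddChar, sub_eq_add_neg, AddChar.map_add_eq_mul, AddChar.map_neg_eq_conj]

noncomputable def traceChar : AddChar (GaloisField p n) ℂ :=
  ZMod.stdAddChar.compAddMonoidHom (Algebra.trace (ZMod p) (GaloisField p n)).toAddMonoidHom

theorem isPrimitive_traceChar : (traceChar p n).IsPrimitive := by
  refine AddChar.IsPrimitive.of_ne_one (AddChar.ne_one_iff.2 ?_)
  obtain ⟨a, ha⟩ := Algebra.trace_surjective (ZMod p) (GaloisField p n) 1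
  refine ⟨a, fun h => one_ne_zero (ZMod.injective_stdAddChar (N := p) ?_)⟩
  simpa [traceChar, ha] using h

theorem W_eq_sum_traceChar (f : GaloisField p n → ZMod p) (y : GaloisField p n) :
    W p n f y = ∑ x, ee p (f x) * traceChar p n (x * -y) := by
  simp [W, Tr, traceChar, ee_eq_stdAddChar, sub_eq_add_neg, AddChar.map_add_eq_mul]

theorem sum_W_mul_conj_W (f g : GaloisField p n → ZMod p) :
    ∑ y, W p n f y * starRingEnd ℂ (W p n g y) =
      Fintype.card (GaloisField p n) * ∑ x, ee p (f x - g x) := by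
  simp_rw [W_eq_sum_traceChar, ee_sub]
  rw [← Equiv.sum_comp (Equiv.neg _)]
  simp only [Equiv.neg_apply, neg_neg]
  exact (isPrimitive_traceChar p n).sum_transform_mul_conj _ _

end GaloisField

section WeaklyRegular

variable (p n : ℕ) [Fact p.Prime] {u : ℂ}

theorem W_mul_conj_W_of_eq_mul_ee {f g fstar gstar : GaloisField p n → ZMod p} (hu : ‖u‖ = 1)
    (hf : ∀ v, W p n f v = u * (Real.sqrt ((p : ℝ) ^ n) : ℂ) * ee p (fstar v))
    (hg : ∀ v, W p n g v = u * (Real.sqrt ((p : ℝ) ^ n) : ℂ) * ee p (gstar v))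
    (v : GaloisField p n) :
    W p n f v * starRingEnd ℂ (W p n g v) = p ^ n * ee p (fstar v - gstar v) := by
  have hu_conj : u * starRingEnd ℂ u = 1 := by
    rw [Complex.mul_conj, Complex.normSq_eq_norm_sq, hu]
    norm_num
  have hsqrt : (Real.sqrt ((p : ℝ) ^ n) : ℂ) * Real.sqrt ((p : ℝ) ^ n) = p ^ n := by
    rw [← Complex.ofReal_mul, Real.mul_self_sqrt (by positivity)]
    push_cast
    rfl
  rw [hf, hg, ee_sub, map_mul, map_mul, Complex.conj_ofReal]
  linear_combination (ee p (fstar v) * starRingEnd ℂ (ee p (gstar v))) *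
    (Real.sqrt ((p : ℝ) ^ n) * Real.sqrt ((p : ℝ) ^ n) * hu_conj + hsqrt)

theorem card_eq_of_W_eq_mul_ee {f fstar : GaloisField p n → ZMod p} (hu : ‖u‖ = 1)
    (hf : ∀ v, W p n f v = u * (Real.sqrt ((p : ℝ) ^ n) : ℂ) * ee p (fstar v)) :
    (Fintype.card (GaloisField p n) : ℂ) = p ^ n := by
  -- `GaloisField p 0` is `ZMod p`, of cardinality `p ≠ p ^ 0`, so `GaloisField.card` needs
  -- `n ≠ 0`; Parseval for `g = f` gives the cardinality unconditionally.
  have h := sum_W_mul_conj_W p n f f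
  simp only [W_mul_conj_W_of_eq_mul_ee p n hu hf hf, sub_self, ee_eq_stdAddChar,
    AddChar.map_zero_eq_one, mul_one, Finset.sum_const, Finset.card_univ, nsmul_eq_mul] at h
  exact mul_left_cancel₀ (Nat.cast_ne_zero.2 Fintype.card_ne_zero) h.symm

end WeaklyRegular

theorem stmt_15 (p n : ℕ) [Fact p.Prime]
    (f g fstar gstar : GaloisField p n → ZMod p) (u : ℂ) (hu : ‖u‖ = 1)
    (hf : ∀ v : GaloisField p n,
      W p n f v = u * (Real.sqrt ((p : ℝ) ^ n) : ℂ) * ee p (fstar v))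
    (hg : ∀ v : GaloisField p n,
      W p n g v = u * (Real.sqrt ((p : ℝ) ^ n) : ℂ) * ee p (gstar v)) :
    ∑ b : GaloisField p n, ee p (fstar b - gstar b) =
      ∑ x : GaloisField p n, ee p (f x - g x) := by
  have parseval := sum_W_mul_conj_W p n f g
  simp only [W_mul_conj_W_of_eq_mul_ee p n hu hf hg, ← Finset.mul_sum,
    card_eq_of_W_eq_mul_ee p n hu hf] at parseval
  exact mul_left_cancel₀ (pow_ne_zero n (Nat.cast_ne_zero.2 (Fact.out : p.Prime).ne_zero))
    parseval
end
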